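/- Let φ be the involution on S_n(132) defined by φ(empty) = empty and φ(α ⊖ (β ⊕ 1)) = φ(β) ⊖ (φ(α) ⊕ 1). For every π ∈ S_n(132), the number of occurrences of the vincular pattern 2-\underline{31} in φ(π) equals the number of occurrences of 2-\underline{13} in π, and the number of occurrences of 2-\underline{13} in φ(π) equals the number of occurrences of 2-\underline{31} in π. -/

import Mathlib

open Equiv Finset

/-- π avoids the classical pattern 132. -/
def avoids132 {n : ℕ} (π : Equiv.Perm (Fin n)) : Prop :=
  ¬ ∃ i j k : Fin n, i < j ∧ j < k ∧ π i < π k ∧ π k < π j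

/-- π avoids the classical pattern 231. -/
def avoids231 {n : ℕ} (π : Equiv.Perm (Fin n)) : Prop :=
  ¬ ∃ i j k : Fin n, i < j ∧ j < k ∧ π k < π i ∧ π i < π j

/-- π avoids the classical pattern 312. -/
def avoids312 {n : ℕ} (π : Equiv.Perm (Fin n)) : Prop :=
  ¬ ∃ i j k : Fin n, i < j ∧ j < k ∧ π j < π k ∧ π k < π i

/-- Direct sum α ⊕ β of permutations. -/
def dsum {a b : ℕ} (α : Equiv.Perm (Fin a)) (β : Equiv.Perm (Fin b)) :
    Equiv.Perm (Fin (a + b)) :=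
  finSumFinEquiv.symm.trans ((Equiv.sumCongr α β).trans finSumFinEquiv)

/-- Skew sum α ⊖ β of permutations. -/
def ssum {a b : ℕ} (α : Equiv.Perm (Fin a)) (β : Equiv.Perm (Fin b)) :
    Equiv.Perm (Fin (a + b)) :=
  finSumFinEquiv.symm.trans ((Equiv.sumCongr α β).trans
    ((Equiv.sumComm (Fin a) (Fin b)).trans
      (finSumFinEquiv.trans (finCongr (Nat.add_comm b a)))))

/-- Transport a permutation of Fin m along an equality m = n. -/
def castPerm {m n : ℕ} (h : m = n) (π : Equiv.Perm (Fin m)) : Equiv.Perm (Fin n) :=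
  Equiv.permCongr (finCongr h) π

/-- Number of descents. -/
def des {n : ℕ} (π : Equiv.Perm (Fin n)) : ℕ :=
  (Finset.univ.filter (fun p : Fin n × Fin n =>
    (p.1 : ℕ) + 1 = (p.2 : ℕ) ∧ π p.2 < π p.1)).card

/-- Number of occurrences of the vincular pattern 2-\underline{31}. -/
def occ2_31 {n : ℕ} (π : Equiv.Perm (Fin n)) : ℕ :=
  (Finset.univ.filter (fun p : Fin n × Fin n × Fin n =>
    p.1 < p.2.1 ∧ (p.2.1 : ℕ) + 1 = (p.2.2 : ℕ) ∧
      π p.2.2 < π p.1 ∧ π p.1 < π p.2.1)).card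

/-- Number of occurrences of the vincular pattern 2-\underline{13}. -/
def occ2_13 {n : ℕ} (π : Equiv.Perm (Fin n)) : ℕ :=
  (Finset.univ.filter (fun p : Fin n × Fin n × Fin n =>
    p.1 < p.2.1 ∧ (p.2.1 : ℕ) + 1 = (p.2.2 : ℕ) ∧
      π p.2.1 < π p.1 ∧ π p.1 < π p.2.2)).card

/-- Number of occurrences of the vincular pattern \underline{21}-3. -/
def occ21_3 {n : ℕ} (π : Equiv.Perm (Fin n)) : ℕ :=
  (Finset.univ.filter (fun p : Fin n × Fin n × Fin n =>
    (p.1 : ℕ) + 1 = (p.2.1 : ℕ) ∧ p.2.1 < p.2.2 ∧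
      π p.2.1 < π p.1 ∧ π p.1 < π p.2.2)).card

/-- Number of occurrences of the vincular pattern \underline{23}-1. -/
def occ23_1 {n : ℕ} (π : Equiv.Perm (Fin n)) : ℕ :=
  (Finset.univ.filter (fun p : Fin n × Fin n × Fin n =>
    (p.1 : ℕ) + 1 = (p.2.1 : ℕ) ∧ p.2.1 < p.2.2 ∧
      π p.2.2 < π p.1 ∧ π p.1 < π p.2.1)).card

/-- Number of occurrences of the vincular pattern 3-\underline{12}. -/
def occ3_12 {n : ℕ} (π : Equiv.Perm (Fin n)) : ℕ :=
  (Finset.univ.filter (fun p : Fin n × Fin n × Fin n =>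
    p.1 < p.2.1 ∧ (p.2.1 : ℕ) + 1 = (p.2.2 : ℕ) ∧
      π p.2.1 < π p.2.2 ∧ π p.2.2 < π p.1)).card

/-- Number of occurrences of the vincular pattern \underline{31}-2. -/
def occ31_2 {n : ℕ} (π : Equiv.Perm (Fin n)) : ℕ :=
  (Finset.univ.filter (fun p : Fin n × Fin n × Fin n =>
    (p.1 : ℕ) + 1 = (p.2.1 : ℕ) ∧ p.2.1 < p.2.2 ∧
      π p.2.1 < π p.2.2 ∧ π p.2.2 < π p.1)).card

/-- Number of right-to-left maxima. -/
def rlmax {n : ℕ} (π : Equiv.Perm (Fin n)) : ℕ :=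
  (Finset.univ.filter (fun i : Fin n => ∀ j, i < j → π j < π i)).card

/-- Number of right-to-left minima. -/
def rlmin {n : ℕ} (π : Equiv.Perm (Fin n)) : ℕ :=
  (Finset.univ.filter (fun i : Fin n => ∀ j, i < j → π i < π j)).card

/-- Occurrences of the pattern 1-2 ending at the last position: indices i < n-1 with π_i < π_{n-1} (plus the anchor). -/
def stat12end {n : ℕ} (π : Equiv.Perm (Fin n)) : ℕ :=
  (Finset.univ.filter (fun p : Fin n × Fin n =>
    p.1 < p.2 ∧ (p.2 : ℕ) + 1 = n ∧ π p.1 < π p.2)).card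

/-- Occurrences of the pattern 2-1 ending at the last position. -/
def stat21end {n : ℕ} (π : Equiv.Perm (Fin n)) : ℕ :=
  (Finset.univ.filter (fun p : Fin n × Fin n =>
    p.1 < p.2 ∧ (p.2 : ℕ) + 1 = n ∧ π p.2 < π p.1)).card

/-!
A nonempty 132-avoider π with last letter b is α ⊖ (β ⊕ 1): the letters larger than b form a
prefix, since a smaller letter before a larger one would make a 132 with the final b.
In an occurrence of 2-31 or 2-13 the first letter lies strictly between the two adjacent ones, so
it cannot sit in one summand of a direct or skew sum while the adjacent pair sits in the next one.
Hence both counts are additive over ⊕ and ⊖ up to the occurrences whose adjacent pair straddles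
the junction; these add the last letter of α to `occ2_31 (α ⊖ γ)` and `|α| - 1` minus it to
`occ2_13 (α ⊕ γ)` (letters are `0, …, n - 1`). The last letters of φ(π) and π add up to `n - 1`,
so φ exchanges these junction terms, and the theorem follows by induction.
-/

namespace Equiv.Perm

variable {n : ℕ}

-- Reads `0` past the end, so that `π.word (n - 1) = 0` when `n = 0`.
def word (π : Perm (Fin n)) (i : ℕ) : ℕ :=
  if h : i < n then π ⟨i, h⟩ else 0

@[simp]
lemma word_val (π : Perm (Fin n)) (i : Fin n) : π.word i = π i := by
  simp [word]

lemma word_of_lt (π : Perm (Fin n)) {i : ℕ} (hi : i < n) : π.word i = π ⟨i, hi⟩ :=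
  dif_pos hi

lemma word_lt (π : Perm (Fin n)) {i : ℕ} (hi : i < n) : π.word i < n := by
  simp [word_of_lt π hi]

lemma word_inj (π : Perm (Fin n)) {i j : ℕ} (hi : i < n) (hj : j < n) :
    π.word i = π.word j ↔ i = j := by
  simp [word_of_lt π hi, word_of_lt π hj, Fin.val_eq_val, π.injective.eq_iff]

lemma inv_word_word (π : Perm (Fin n)) {i : ℕ} (hi : i < n) : π⁻¹.word (π.word i) = i := by
  simp [word_of_lt π hi, word_of_lt π⁻¹ (Fin.is_lt _)]

lemma ext_word {σ τ : Perm (Fin n)} (h : ∀ i < n, σ.word i = τ.word i) : σ = τ := by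
  ext i
  simpa using h i i.isLt

lemma exists_word_eq {f : ℕ → ℕ} (hf : ∀ i < n, f i < n)
    (hinj : ∀ i < n, ∀ j < n, f i = f j → i = j) :
    ∃ π : Perm (Fin n), ∀ i < n, π.word i = f i := by
  let g : Fin n → Fin n := fun i => ⟨f i, hf i i.isLt⟩
  have hg : g.Injective := fun i j h => Fin.ext (hinj i i.isLt j j.isLt (Fin.val_eq_of_eq h))
  refine ⟨Equiv.ofBijective g (Finite.injective_iff_bijective.mp hg), fun i hi => ?_⟩
  simp [word_of_lt _ hi, g]

lemma card_filter_word (π : Perm (Fin n)) (p : ℕ → Prop) [DecidablePred p] :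
    #{i ∈ range n | p (π.word i)} = #{v ∈ range n | p v} := by
  refine card_nbij' π.word π⁻¹.word ?_ ?_ ?_ ?_ <;> intro i hi <;>
    simp only [coe_filter, mem_range, Set.mem_ofPred_eq] at hi ⊢
  · exact ⟨π.word_lt hi.1, hi.2⟩
  · refine ⟨π⁻¹.word_lt hi.1, ?_⟩
    simpa using (π⁻¹.inv_word_word hi.1).symm ▸ hi.2
  · exact π.inv_word_word hi.1
  · simpa using π⁻¹.inv_word_word hi.1

lemma card_filter_word_init (π : Perm (Fin n)) (p : ℕ → Prop) [DecidablePred p]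
    (hlast : ¬ p (π.word (n - 1))) :
    #{i ∈ range (n - 1) | p (π.word i)} = #{v ∈ range n | p v} := by
  rw [← π.card_filter_word]
  rcases Nat.eq_zero_or_pos n with rfl | hn
  · simp
  have hrange : range n = insert (n - 1) (range (n - 1)) := by
    rw [← range_add_one, Nat.sub_add_cancel hn]
  rw [hrange, filter_insert, if_neg hlast]

lemma card_filter_word_lt_word_last (π : Perm (Fin n)) :
    #{i ∈ range (n - 1) | π.word i < π.word (n - 1)} = π.word (n - 1) := by
  have hlast : π.word (n - 1) ≤ n := by
    unfold word; split_ifs with h <;> omega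
  rw [π.card_filter_word_init (· < π.word (n - 1)) (lt_irrefl _),
    show {v ∈ range n | v < π.word (n - 1)} = range (π.word (n - 1)) by ext; simp; omega,
    card_range]

lemma card_filter_word_last_lt_word (π : Perm (Fin n)) :
    #{i ∈ range (n - 1) | π.word (n - 1) < π.word i} = n - 1 - π.word (n - 1) := by
  rw [π.card_filter_word_init (π.word (n - 1) < ·) (lt_irrefl _),
    show {v ∈ range n | π.word (n - 1) < v} = Ioo (π.word (n - 1)) n by ext; simp; omega,
    Nat.card_Ioo]
  omega

end Equiv.Perm

open Equiv.Perm

section Sums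

variable {a c : ℕ} (α : Perm (Fin a)) (γ : Perm (Fin c))

lemma word_ssum_of_lt {i : ℕ} (hi : i < a) : (ssum α γ).word i = c + α.word i := by
  rw [word_of_lt _ (by omega), word_of_lt _ hi]
  have (x : Fin a) : (ssum α γ (Fin.castAdd c x) : ℕ) = c + α x := by
    simp [ssum, Nat.add_comm]
  exact this ⟨i, hi⟩

lemma word_ssum_add {t : ℕ} (ht : t < c) : (ssum α γ).word (a + t) = γ.word t := by
  rw [word_of_lt _ (by omega), word_of_lt _ ht]
  have (x : Fin c) : (ssum α γ (Fin.natAdd a x) : ℕ) = γ x := by simp [ssum]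
  exact this ⟨t, ht⟩

lemma word_dsum_of_lt {i : ℕ} (hi : i < a) : (dsum α γ).word i = α.word i := by
  rw [word_of_lt _ (by omega), word_of_lt _ hi]
  have (x : Fin a) : (dsum α γ (Fin.castAdd c x) : ℕ) = α x := by simp [dsum]
  exact this ⟨i, hi⟩

lemma word_dsum_add {t : ℕ} (ht : t < c) : (dsum α γ).word (a + t) = a + γ.word t := by
  rw [word_of_lt _ (by omega), word_of_lt _ ht]
  have (x : Fin c) : (dsum α γ (Fin.natAdd a x) : ℕ) = a + γ x := by simp [dsum]
  exact this ⟨t, ht⟩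

end Sums

lemma word_castPerm {m n : ℕ} (h : m = n) (π : Equiv.Perm (Fin m)) :
    (castPerm h π).word = π.word := by
  subst h
  rfl

lemma word_one_zero : (1 : Equiv.Perm (Fin 1)).word 0 = 0 := rfl

section AdjCount

variable (R : ℕ → ℕ → ℕ → Prop) [∀ x y z, Decidable (R x y z)]

-- Occurrences `(i, k - 1, k)` of the vincular pattern x-\underline{yz} with `R x y z`.
def adjCount (w : ℕ → ℕ) (n : ℕ) : ℕ :=
  ∑ k ∈ range n, #{i ∈ range (k - 1) | R (w i) (w (k - 1)) (w k)}

lemma card_filter_eq_adjCount {n : ℕ} (π : Equiv.Perm (Fin n)) :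
    #{p : Fin n × Fin n × Fin n |
      p.1 < p.2.1 ∧ (p.2.1 : ℕ) + 1 = p.2.2 ∧ R (π p.1) (π p.2.1) (π p.2.2)} =
      adjCount R π.word n := by
  rw [adjCount, ← card_sigma]
  refine card_bij (fun p _ => ⟨p.2.2, p.1⟩) ?_ ?_ ?_
  · rintro ⟨i, j, k⟩ hp
    simp only [mem_filter, mem_univ, true_and, Fin.lt_def] at hp
    obtain ⟨hij, hjk, hR⟩ := hp
    have hj : (k : ℕ) - 1 = j := by omega
    simp [hj, hR, hij]
  · rintro ⟨i, j, k⟩ hp ⟨i', j', k'⟩ hp' h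
    simp only [mem_filter, mem_univ, true_and] at hp hp'
    simp only [Sigma.mk.injEq, heq_eq_eq] at h
    obtain ⟨hk, hi⟩ := h
    simp only [Prod.mk.injEq]
    omega
  · rintro ⟨k, i⟩ hki
    simp only [mem_sigma, mem_range, mem_filter] at hki
    obtain ⟨hk, hi, hR⟩ := hki
    refine ⟨(⟨i, by omega⟩, ⟨k - 1, by omega⟩, ⟨k, hk⟩), ?_, rfl⟩
    rw [π.word_of_lt (by omega), π.word_of_lt (by omega), π.word_of_lt hk] at hR
    simp only [mem_filter, mem_univ, true_and, Fin.lt_def]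
    exact ⟨hi, by omega, hR⟩

lemma occ2_31_eq_adjCount {n : ℕ} (π : Equiv.Perm (Fin n)) :
    occ2_31 π = adjCount (fun x y z => z < x ∧ x < y) π.word n :=
  card_filter_eq_adjCount (fun x y z => z < x ∧ x < y) π

lemma occ2_13_eq_adjCount {n : ℕ} (π : Equiv.Perm (Fin n)) :
    occ2_13 π = adjCount (fun x y z => y < x ∧ x < z) π.word n :=
  card_filter_eq_adjCount (fun x y z => y < x ∧ x < z) π

lemma adjCount_congr {w w' : ℕ → ℕ} {n : ℕ}
    (h : ∀ i j k, i < n → j < n → k < n →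
      (R (w i) (w j) (w k) ↔ R (w' i) (w' j) (w' k))) :
    adjCount R w n = adjCount R w' n := by
  refine sum_congr rfl fun k hk => congrArg card (filter_congr fun i hi => ?_)
  rw [mem_range] at hk hi
  exact h _ _ _ (by omega) (by omega) hk

lemma adjCount_append (w : ℕ → ℕ) (a c : ℕ)
    (hsep : ∀ i j, i < a → a ≤ j → j < a + c → ¬ R (w i) (w j) (w (j + 1))) :
    adjCount R w (a + (c + 1)) = adjCount R w a + adjCount R (fun t => w (a + t)) (c + 1) +
      #{i ∈ range (a - 1) | R (w i) (w (a - 1)) (w a)} := by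
  have hterm (t : ℕ) (ht : t < c) :
      #{i ∈ range (a + (t + 1) - 1) | R (w i) (w (a + (t + 1) - 1)) (w (a + (t + 1)))} =
        #{i ∈ range (t + 1 - 1) | R (w (a + i)) (w (a + (t + 1 - 1))) (w (a + (t + 1)))} := by
    rw [show a + (t + 1) - 1 = a + t by omega, Nat.add_sub_cancel, card_filter, card_filter,
      sum_range_add, add_eq_right]
    refine sum_eq_zero fun i hi => if_neg (hsep i (a + t) (mem_range.mp hi) (by omega) (by omega))
  unfold adjCount
  rw [sum_range_add, sum_range_succ', sum_range_succ' _ c,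
    sum_congr rfl fun t ht => hterm t (mem_range.mp ht)]
  simp only [add_tsub_cancel_right, add_zero, zero_tsub, range_zero, filter_empty, card_empty]
  omega

end AdjCount

section SumAdditivity

variable {R : ℕ → ℕ → ℕ → Prop} [∀ x y z, Decidable (R x y z)] {a c : ℕ}
  (α : Perm (Fin a)) (γ : Perm (Fin (c + 1)))

lemma adjCount_ssum (hR : ∀ x y z, R x y z → x < y ∨ x < z)
    (hshift : ∀ d x y z, R (d + x) (d + y) (d + z) ↔ R x y z) :
    adjCount R (ssum α γ).word (a + (c + 1)) = adjCount R α.word a + adjCount R γ.word (c + 1) +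
      #{i ∈ range (a - 1) | R (c + 1 + α.word i) (c + 1 + α.word (a - 1)) (γ.word 0)} := by
  have hlow {i : ℕ} (hi : i < a) := word_ssum_of_lt α γ hi
  have hhigh {t : ℕ} (ht : t < c + 1) := word_ssum_add α γ ht
  have hsep (i j : ℕ) (hi : i < a) (hj : a ≤ j) (hjc : j < a + c) :
      ¬ R ((ssum α γ).word i) ((ssum α γ).word j) ((ssum α γ).word (j + 1)) := by
    intro h
    have hi' := hlow hi
    have hj' := hhigh (t := j - a) (by omega)
    have hj1 := hhigh (t := j + 1 - a) (by omega)
    rw [Nat.add_sub_cancel' hj] at hj'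
    rw [show a + (j + 1 - a) = j + 1 by omega] at hj1
    have := γ.word_lt (i := j - a) (by omega)
    have := γ.word_lt (i := j + 1 - a) (by omega)
    rcases hR _ _ _ h with h | h <;> omega
  rw [adjCount_append R _ a c hsep]
  congr 2
  · exact adjCount_congr R fun i j k hi hj hk => by rw [hlow hi, hlow hj, hlow hk, hshift]
  · exact adjCount_congr R fun i j k hi hj hk => by rw [hhigh hi, hhigh hj, hhigh hk]
  · refine filter_congr fun i hi => ?_
    rw [mem_range] at hi
    rw [hlow (by omega), hlow (by omega), ← hhigh (Nat.succ_pos c), add_zero]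

lemma adjCount_dsum (hR : ∀ x y z, R x y z → y < x ∨ z < x)
    (hshift : ∀ d x y z, R (d + x) (d + y) (d + z) ↔ R x y z) :
    adjCount R (dsum α γ).word (a + (c + 1)) = adjCount R α.word a + adjCount R γ.word (c + 1) +
      #{i ∈ range (a - 1) | R (α.word i) (α.word (a - 1)) (a + γ.word 0)} := by
  have hlow {i : ℕ} (hi : i < a) := word_dsum_of_lt α γ hi
  have hhigh {t : ℕ} (ht : t < c + 1) := word_dsum_add α γ ht
  have hsep (i j : ℕ) (hi : i < a) (hj : a ≤ j) (hjc : j < a + c) :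
      ¬ R ((dsum α γ).word i) ((dsum α γ).word j) ((dsum α γ).word (j + 1)) := by
    intro h
    have hi' := hlow hi
    have hj' := hhigh (t := j - a) (by omega)
    have hj1 := hhigh (t := j + 1 - a) (by omega)
    rw [Nat.add_sub_cancel' hj] at hj'
    rw [show a + (j + 1 - a) = j + 1 by omega] at hj1
    have := α.word_lt hi
    rcases hR _ _ _ h with h | h <;> omega
  rw [adjCount_append R _ a c hsep]
  congr 2
  · exact adjCount_congr R fun i j k hi hj hk => by rw [hlow hi, hlow hj, hlow hk]
  · exact adjCount_congr R fun i j k hi hj hk => by rw [hhigh hi, hhigh hj, hhigh hk, hshift]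
  · refine filter_congr fun i hi => ?_
    rw [mem_range] at hi
    rw [hlow (by omega), hlow (by omega), ← hhigh (Nat.succ_pos c), add_zero]

end SumAdditivity

section Occurrences

variable {a c : ℕ} (α : Perm (Fin a)) (γ : Perm (Fin (c + 1)))

lemma occ2_31_ssum : occ2_31 (ssum α γ) = occ2_31 α + occ2_31 γ + α.word (a - 1) := by
  simp only [occ2_31_eq_adjCount]
  rw [adjCount_ssum α γ (fun _ _ _ h => Or.inl h.2) (fun _ _ _ _ => by omega)]
  have := γ.word_lt (Nat.succ_pos c)
  exact congrArg _ ((congrArg card (filter_congr fun i _ => by omega)).trans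
    α.card_filter_word_lt_word_last)

lemma occ2_13_ssum : occ2_13 (ssum α γ) = occ2_13 α + occ2_13 γ := by
  simp only [occ2_13_eq_adjCount]
  rw [adjCount_ssum α γ (fun _ _ _ h => Or.inr h.2) (fun _ _ _ _ => by omega), add_eq_left,
    card_eq_zero, filter_eq_empty_iff]
  have := γ.word_lt (Nat.succ_pos c)
  intro i _
  omega

lemma occ2_31_dsum : occ2_31 (dsum α γ) = occ2_31 α + occ2_31 γ := by
  simp only [occ2_31_eq_adjCount]
  rw [adjCount_dsum α γ (fun _ _ _ h => Or.inr h.1) (fun _ _ _ _ => by omega), add_eq_left,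
    card_eq_zero, filter_eq_empty_iff]
  intro i hi
  have := α.word_lt (i := i) (by simp at hi; omega)
  omega

lemma occ2_13_dsum :
    occ2_13 (dsum α γ) = occ2_13 α + occ2_13 γ + (a - 1 - α.word (a - 1)) := by
  simp only [occ2_13_eq_adjCount]
  rw [adjCount_dsum α γ (fun _ _ _ h => Or.inl h.1) (fun _ _ _ _ => by omega)]
  refine congrArg _ ((congrArg card (filter_congr fun i hi => ?_)).trans
    α.card_filter_word_last_lt_word)
  have := α.word_lt (i := i) (by simp at hi; omega)
  omega

end Occurrences

lemma occ2_31_one : occ2_31 (1 : Equiv.Perm (Fin 1)) = 0 := by decide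

lemma occ2_13_one : occ2_13 (1 : Equiv.Perm (Fin 1)) = 0 := by decide

lemma occ2_31_castPerm {m n : ℕ} (h : m = n) (π : Equiv.Perm (Fin m)) :
    occ2_31 (castPerm h π) = occ2_31 π := by
  subst h
  rfl

lemma occ2_13_castPerm {m n : ℕ} (h : m = n) (π : Equiv.Perm (Fin m)) :
    occ2_13 (castPerm h π) = occ2_13 π := by
  subst h
  rfl

lemma lt_card_filter_iff_of_antitone {m : ℕ} (p : ℕ → Prop) [DecidablePred p]
    (hp : ∀ i j, i < j → j < m → p j → p i) {i : ℕ} (hi : i < m) :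
    p i ↔ i < #{j ∈ range m | p j} := by
  constructor
  · intro hpi
    have hsub : range (i + 1) ⊆ {j ∈ range m | p j} := fun j hj => by
      rw [mem_range] at hj
      rw [mem_filter, mem_range]
      rcases Nat.lt_or_eq_of_le (Nat.le_of_lt_succ hj) with hj | rfl
      exacts [⟨by omega, hp j i hj hi hpi⟩, ⟨hi, hpi⟩]
    simpa using card_le_card hsub
  · intro hlt
    by_contra hpi
    have hsub : {j ∈ range m | p j} ⊆ range i := fun j hj => by
      rw [mem_filter, mem_range] at hj
      rw [mem_range]
      by_contra hij
      rcases Nat.lt_or_eq_of_le (Nat.not_lt.mp hij) with hij | rfl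
      exacts [hpi (hp i j hij hj.1 hj.2), hpi hj.2]
    simpa using (card_le_card hsub).trans_lt' hlt

lemma avoids132_iff_word {n : ℕ} (π : Perm (Fin n)) :
    avoids132 π ↔ ∀ i j k, i < j → j < k → k < n →
      ¬ (π.word i < π.word k ∧ π.word k < π.word j) := by
  constructor
  · rintro hπ i j k hij hjk hk ⟨h₁, h₂⟩
    rw [π.word_of_lt (i := i) (by omega), π.word_of_lt hk] at h₁
    rw [π.word_of_lt (i := j) (by omega), π.word_of_lt hk] at h₂
    exact hπ ⟨⟨i, by omega⟩, ⟨j, by omega⟩, ⟨k, hk⟩, hij, hjk, h₁, h₂⟩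
  · rintro h ⟨i, j, k, hij, hjk, h₁, h₂⟩
    exact h i j k hij hjk k.isLt (by simpa using And.intro h₁ h₂)

lemma avoids132_of_word_eq_add {m n : ℕ} {π : Perm (Fin n)} (α : Perm (Fin m))
    (hπ : avoids132 π) (d e : ℕ) (hd : d + m ≤ n)
    (hw : ∀ i < m, π.word (d + i) = e + α.word i) :
    avoids132 α := by
  rw [avoids132_iff_word] at hπ ⊢
  intro i j k hij hjk hk h
  refine hπ (d + i) (d + j) (d + k) (by omega) (by omega) (by omega) ?_
  rw [hw i (by omega), hw j (by omega), hw k hk]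
  omega

lemma avoids132.lt_word_iff {n : ℕ} {π : Perm (Fin n)} (hπ : avoids132 π) {i : ℕ}
    (hi : i < n - 1) : π.word (n - 1) < π.word i ↔ i < n - 1 - π.word (n - 1) := by
  rw [← π.card_filter_word_last_lt_word]
  refine lt_card_filter_iff_of_antitone (π.word (n - 1) < π.word ·) (fun i j hij hj hbj => ?_) hi
  rw [avoids132_iff_word] at hπ
  by_contra hbi
  have hne := (π.word_inj (i := i) (j := n - 1) (by omega) (by omega)).not.mpr (by omega)
  exact hπ i j (n - 1) hij hj (by omega) ⟨by omega, hbj⟩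

lemma castPerm_self {n : ℕ} (h : n = n) (π : Equiv.Perm (Fin n)) : castPerm h π = π :=
  Equiv.ext fun _ => rfl

lemma word_ssum_dsum_one_last {a b : ℕ} (α : Perm (Fin a)) (β : Perm (Fin b)) :
    (ssum α (dsum β (1 : Perm (Fin 1)))).word (a + b) = b := by
  simpa [word_one_zero] using (word_ssum_add α _ (Nat.lt_succ_self b)).trans
    (word_dsum_add β (1 : Perm (Fin 1)) (t := 0) Nat.one_pos)

lemma exists_eq_ssum_dsum_one {n : ℕ} (hn : 0 < n) {π : Perm (Fin n)} (hπ : avoids132 π) :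
    ∃ (a b : ℕ) (hab : a + (b + 1) = n) (α : Perm (Fin a)) (β : Perm (Fin b)),
      avoids132 α ∧ avoids132 β ∧ π = castPerm hab (ssum α (dsum β 1)) := by
  set b := π.word (n - 1) with hb
  set a := n - 1 - b
  have hbn : b < n := π.word_lt (by omega)
  have hab : a + (b + 1) = n := by omega
  have hlast_ne {i : ℕ} (hi : i < n - 1) : π.word i ≠ b := by
    rw [hb, Ne, π.word_inj (by omega) (by omega)]
    omega
  have hα : ∀ i < a, π.word i - (b + 1) < a := fun i hi => by
    have := π.word_lt (i := i) (by omega)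
    omega
  have hβ : ∀ t < b, π.word (a + t) < b := fun t ht => by
    have := hπ.lt_word_iff (i := a + t) (by omega)
    have := hlast_ne (i := a + t) (by omega)
    omega
  obtain ⟨α, hαw⟩ := exists_word_eq hα fun i hi j hj h => by
    have := hπ.lt_word_iff (i := i) (by omega)
    have := hπ.lt_word_iff (i := j) (by omega)
    exact (π.word_inj (by omega) (by omega)).mp (by omega)
  obtain ⟨β, hβw⟩ := exists_word_eq hβ fun i hi j hj h =>
    by simpa using (π.word_inj (by omega) (by omega)).mp h
  have hlow : ∀ i < a, π.word i = b + 1 + α.word i := fun i hi => by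
    have := hπ.lt_word_iff (i := i) (by omega)
    rw [hαw i hi]
    omega
  refine ⟨a, b, hab, α, β,
    avoids132_of_word_eq_add α hπ 0 (b + 1) (by omega) (by simpa using hlow),
    avoids132_of_word_eq_add β hπ a 0 (by omega) (by simpa using fun t ht => (hβw t ht).symm),
    ext_word fun i hi => ?_⟩
  rw [word_castPerm]
  obtain hi' | hi' | hi' : i < a ∨ (a ≤ i ∧ i < a + b) ∨ i = a + b := by omega
  · rw [word_ssum_of_lt _ _ hi', hlow i hi']
  · obtain ⟨t, rfl⟩ := Nat.exists_eq_add_of_le hi'.1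
    rw [word_ssum_add _ _ (by omega), word_dsum_of_lt _ _ (by omega), hβw t (by omega)]
  · rw [hi', word_ssum_dsum_one_last, show a + b = n - 1 by omega]

lemma word_last_add_word_last
    (φ : ∀ n : ℕ, Equiv.Perm (Fin n) → Equiv.Perm (Fin n))
    (hrec : ∀ (a b : ℕ) (α : Equiv.Perm (Fin a)) (β : Equiv.Perm (Fin b)),
      avoids132 α → avoids132 β →
      φ (a + (b + 1)) (ssum α (dsum β (1 : Equiv.Perm (Fin 1)))) =
        castPerm (Nat.add_left_comm b a 1)
          (ssum (φ b β) (dsum (φ a α) (1 : Equiv.Perm (Fin 1)))))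
    {n : ℕ} {π : Equiv.Perm (Fin n)} (hπ : avoids132 π) :
    (φ n π).word (n - 1) + π.word (n - 1) = n - 1 := by
  rcases Nat.eq_zero_or_pos n with rfl | hn
  · simp [Equiv.Perm.word]
  obtain ⟨a, b, rfl, α, β, hα, hβ, rfl⟩ := exists_eq_ssum_dsum_one hn hπ
  rw [castPerm_self, hrec a b α β hα hβ, word_castPerm,
    show a + (b + 1) - 1 = b + a by omega, word_ssum_dsum_one_last,
    show b + a = a + b by omega, word_ssum_dsum_one_last]

theorem stmt6
    (φ : ∀ n : ℕ, Equiv.Perm (Fin n) → Equiv.Perm (Fin n))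
    (hrec : ∀ (a b : ℕ) (α : Equiv.Perm (Fin a)) (β : Equiv.Perm (Fin b)),
      avoids132 α → avoids132 β →
      φ (a + (b + 1)) (ssum α (dsum β (1 : Equiv.Perm (Fin 1)))) =
        castPerm (show b + (a + 1) = a + (b + 1) by omega)
          (ssum (φ b β) (dsum (φ a α) (1 : Equiv.Perm (Fin 1))))) :
    ∀ (n : ℕ) (π : Equiv.Perm (Fin n)), avoids132 π →
      occ2_31 (φ n π) = occ2_13 π ∧ occ2_13 (φ n π) = occ2_31 π := by
  intro n
  induction n using Nat.strong_induction_on with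
  | _ n ih =>
    intro π hπ
    rcases Nat.eq_zero_or_pos n with rfl | hn
    · simp [occ2_31, occ2_13]
    obtain ⟨a, b, rfl, α, β, hα, hβ, rfl⟩ := exists_eq_ssum_dsum_one hn hπ
    obtain ⟨ihα₁, ihα₂⟩ := ih a (by omega) α hα
    obtain ⟨ihβ₁, ihβ₂⟩ := ih b (by omega) β hβ
    have hlastα := word_last_add_word_last φ hrec hα
    have hlastβ := word_last_add_word_last φ hrec hβ
    simp only [castPerm_self, hrec a b α β hα hβ, occ2_31_castPerm, occ2_13_castPerm,
      occ2_31_ssum, occ2_13_ssum, occ2_31_dsum, occ2_13_dsum, occ2_31_one, occ2_13_one]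
    omega
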